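/- Deallocation of a fully mutable block preserves read-only locations: suppose ⟨h,s⟩ ⊨_R {φ; ([x]ₙ with permission mut) ∗ (∗_{0≤i<n} x+i ↦_mut eᵢ) ∗ P'}, R ⊆ dom(h), and h' is obtained from h by removing the locations bl(⟦x⟧ₛ) and ⟦x⟧ₛ+i for 0 ≤ i < n. Then R ⊆ dom(h') and h(r) = h'(r) for all r ∈ R. -/

import Mathlib

/-- Locations and values are natural numbers. -/
abbrev Loc := ℕ
abbrev Val := ℕ
/-- Heaps: partial maps from locations to values. -/
abbrev Heap := Loc → Option Val
/-- Stacks: maps from variables to values. -/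
abbrev Stack := String → Val

/-- Domain of a heap. -/
def Heap.dom (h : Heap) : Set Loc := {l | h l ≠ none}

/-- Disjointness of heaps. -/
def Heap.Disj (h₁ h₂ : Heap) : Prop := ∀ l, h₁ l = none ∨ h₂ l = none

/-- Disjoint union of heaps. -/
def Heap.union (h₁ h₂ : Heap) : Heap :=
  fun l => match h₁ l with
    | some v => some v
    | none => h₂ l

/-- Pointwise heap update. -/
def Heap.update (h : Heap) (l : Loc) (v : Val) : Heap :=
  fun l' => if l' = l then some v else h l'

/-- Permission annotations. -/
inductive Perm where
  | mut : Perm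
  | imm : Perm
deriving DecidableEq

/-- Expressions. -/
inductive Expr where
  | lit : ℕ → Expr
  | var : String → Expr
  | eq  : Expr → Expr → Expr
  | and : Expr → Expr → Expr
  | not : Expr → Expr

/-- Expression evaluation (booleans coded as 1/0). -/
def Expr.eval (s : Stack) : Expr → ℕ
  | .lit n => n
  | .var x => s x
  | .eq e₁ e₂ => if e₁.eval s = e₂.eval s then 1 else 0
  | .and e₁ e₂ => if e₁.eval s = 1 then (if e₂.eval s = 1 then 1 else 0) else 0
  | .not e => if e.eval s = 1 then 0 else 1

/-- Variables occurring in an expression. -/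
def Expr.vars : Expr → Set String
  | .lit _ => ∅
  | .var x => {x}
  | .eq e₁ e₂ => e₁.vars ∪ e₂.vars
  | .and e₁ e₂ => e₁.vars ∪ e₂.vars
  | .not e => e.vars

/-- Symbolic heaps. -/
inductive SymHeap where
  | emp : SymHeap
  | pts : Expr → ℕ → Perm → Expr → SymHeap   -- e₁ + ι ↦ₐ e₂
  | blk : Expr → ℕ → Perm → SymHeap          -- [e]ₙ with permission a
  | star : SymHeap → SymHeap → SymHeap

/-- Variables occurring in a symbolic heap. -/
def SymHeap.vars : SymHeap → Set String
  | .emp => ∅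
  | .pts e₁ _ _ e₂ => e₁.vars ∪ e₂.vars
  | .blk e _ _ => e.vars
  | .star P Q => P.vars ∪ Q.vars

/-- Satisfaction ⟨h,s⟩ ⊨_R {φ; P}, parameterized by the block-metadata map `bl`
and the fixed set `R` of read-only locations. -/
def Sat (bl : Loc → Loc) (R : Set Loc) (h : Heap) (s : Stack) (φ : Expr) :
    SymHeap → Prop
  | .emp => φ.eval s = 1 ∧ ∀ l, h l = none
  | .pts e₁ ι a e₂ =>
      φ.eval s = 1 ∧
      h.dom = {e₁.eval s + ι} ∧
      h (e₁.eval s + ι) = some (e₂.eval s) ∧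
      (e₁.eval s + ι ∈ R ↔ a = .imm)
  | .blk e n a =>
      φ.eval s = 1 ∧
      h.dom = {bl (e.eval s)} ∧
      h (bl (e.eval s)) = some n ∧
      (bl (e.eval s) ∈ R ↔ a = .imm)
  | .star P Q =>
      ∃ h₁ h₂, h₁.Disj h₂ ∧ h = h₁.union h₂ ∧
        Sat bl R h₁ s φ P ∧ Sat bl R h₂ s φ Q

/-- Iterated separating conjunction of a list of symbolic heaps. -/
def iterStar (Ps : List SymHeap) : SymHeap := Ps.foldr SymHeap.star SymHeap.emp

theorem Sat.blk_not_mem_of_mut {bl : Loc → Loc} {R : Set Loc} {h : Heap} {s : Stack}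
    {φ e : Expr} {n : ℕ} (hsat : Sat bl R h s φ (.blk e n .mut)) : bl (e.eval s) ∉ R :=
  fun hmem => nomatch hsat.2.2.2.mp hmem

theorem Sat.pts_not_mem_of_mut {bl : Loc → Loc} {R : Set Loc} {h : Heap} {s : Stack}
    {φ e v : Expr} {ι : ℕ} (hsat : Sat bl R h s φ (.pts e ι .mut v)) : e.eval s + ι ∉ R :=
  fun hmem => nomatch hsat.2.2.2.mp hmem

theorem Sat.exists_of_mem_iterStar {bl : Loc → Loc} {R : Set Loc} {s : Stack} {φ : Expr}
    {L : List SymHeap} {h : Heap} (hsat : Sat bl R h s φ (iterStar L)) {P : SymHeap}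
    (hP : P ∈ L) : ∃ h₀, Sat bl R h₀ s φ P := by
  induction L generalizing h with
  | nil => cases hP
  | cons Q L ih =>
    obtain ⟨h₁, h₂, -, -, hQ, hL⟩ := hsat
    rcases List.mem_cons.mp hP with rfl | hP
    · exact ⟨h₁, hQ⟩
    · exact ih hL hP

theorem Heap.dom_subset_of_eqOn {h h' : Heap} {R : Set Loc} (hR : R ⊆ h.dom)
    (heq : ∀ r ∈ R, h r = h' r) : R ⊆ h'.dom :=
  fun r hr => by
    simpa only [Heap.dom, Set.mem_ofPred_eq, heq r hr] using hR hr

theorem free_preserves_ro_general (bl : Loc → Loc) (R : Set Loc) (h h' : Heap)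
    (s : Stack) (φ x : Expr) (n : ℕ) (e : ℕ → Expr) (P' : SymHeap)
    (hsat : Sat bl R h s φ
      (.star (.blk x n .mut)
        (.star (iterStar ((List.range n).map fun i => .pts x i .mut (e i))) P')))
    (hR : R ⊆ h.dom)
    (hrest : ∀ l', l' ≠ bl (x.eval s) → (∀ i < n, l' ≠ x.eval s + i) →
      h' l' = h l') :
    R ⊆ h'.dom ∧ ∀ r ∈ R, h r = h' r := by
  obtain ⟨_, _, _, _, hblk, _, _, _, _, hcells, _⟩ := hsat
  have hcell_not_mem : ∀ i < n, x.eval s + i ∉ R := fun i hi => by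
    obtain ⟨_, hpts⟩ := hcells.exists_of_mem_iterStar
      (List.mem_map.mpr ⟨i, List.mem_range.mpr hi, rfl⟩)
    exact hpts.pts_not_mem_of_mut
  have hagree : ∀ r ∈ R, h r = h' r := fun r hr =>
    (hrest r (fun hb => hblk.blk_not_mem_of_mut (hb ▸ hr))
      (fun i hi hc => hcell_not_mem i hi (hc ▸ hr))).symm
  exact ⟨Heap.dom_subset_of_eqOn hR hagree, hagree⟩

theorem free_preserves_ro (bl : Loc → Loc) (R : Set Loc) (h h' : Heap)
    (s : Stack) (φ x : Expr) (n : ℕ) (e : ℕ → Expr) (P' : SymHeap)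
    (hsat : Sat bl R h s φ
      (.star (.blk x n .mut)
        (.star (iterStar ((List.range n).map fun i => .pts x i .mut (e i))) P')))
    (hR : R ⊆ h.dom)
    (hmeta : h' (bl (x.eval s)) = none)
    (hcells : ∀ i < n, h' (x.eval s + i) = none)
    (hrest : ∀ l', l' ≠ bl (x.eval s) → (∀ i < n, l' ≠ x.eval s + i) →
      h' l' = h l') :
    R ⊆ h'.dom ∧ ∀ r ∈ R, h r = h' r :=
  free_preserves_ro_general bl R h h' s φ x n e P' hsat hR hrest
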